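/- Let $\alpha_1, \dots, \alpha_{k+1}$ be complex numbers with $\mathrm{Re}(\alpha_j) > 0$ for all $j$, and let $\Delta^k = \{(t_1,\dots,t_k) \in \mathbb{R}^k : t_j \geq 0, \sum_j t_j \leq 1\}$ be the standard $k$-simplex. Then $\int_{\Delta^k} t_1^{\alpha_1 - 1} \cdots t_k^{\alpha_k - 1} (1 - t_1 - \cdots - t_k)^{\alpha_{k+1} - 1}\, dt = \frac{\Gamma(\alpha_1)\cdots\Gamma(\alpha_{k+1})}{\Gamma(\alpha_1 + \cdots + \alpha_{k+1})}.$ -/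

import Mathlib

/-!
Induction on `k`, integrating out the first coordinate `x = t₀` by Fubini. The slice over `x` is
the simplex of size `1 - x`, carrying the Dirichlet integrand for `α₂, …, α_{k+1}` times
`x ^ (α₁ - 1)`. That integrand is homogeneous, so its integral over the simplex of size `c` is
`c ^ (α₂ + ⋯ + α_{k+1} - 1)` times its integral over the unit simplex. What remains in `x` is the
Beta integral `B(α₁, α₂ + ⋯ + α_{k+1}) = Γ(α₁) Γ(α₂ + ⋯) / Γ(α₁ + ⋯)`, and the same scaling
applied to norms gives integrability.
-/

open MeasureTheory Set

lemma Complex.cpow_sum {ι : Type*} (s : Finset ι) (f : ι → ℂ) {x : ℂ} (hx : x ≠ 0) :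
    x ^ (∑ i ∈ s, f i) = ∏ i ∈ s, x ^ f i := by
  simp only [Complex.cpow_def_of_ne_zero hx, Finset.mul_sum, Complex.exp_sum]

lemma integral_eq_integral_pow_smul_comp_smul {E : Type*} [NormedAddCommGroup E]
    [NormedSpace ℝ E] {n : ℕ} (f : (Fin n → ℝ) → E) {c : ℝ} (hc : 0 < c) :
    ∫ x, f x = ∫ v, c ^ n • f (c • v) := by
  rw [integral_smul, Measure.integral_comp_smul_of_nonneg volume f c (hR := hc.le),
    Module.finrank_fin_fun, smul_inv_smul₀ (pow_ne_zero n hc.ne')]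

namespace Dirichlet

def simplex (n : ℕ) (c : ℝ) : Set (Fin n → ℝ) := {t | (∀ j, 0 ≤ t j) ∧ ∑ j, t j ≤ c}

noncomputable def kernel (n : ℕ) (α : Fin (n + 1) → ℂ) (c : ℝ) (t : Fin n → ℝ) : ℂ :=
  (∏ j, (t j : ℂ) ^ (α j.castSucc - 1)) * ((c - ∑ j, t j : ℝ) : ℂ) ^ (α (Fin.last n) - 1)

noncomputable def integrand (n : ℕ) (α : Fin (n + 1) → ℂ) (c : ℝ) : (Fin n → ℝ) → ℂ :=
  (simplex n c).indicator (kernel n α c)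

variable {n : ℕ}

lemma measurableSet_simplex (c : ℝ) : MeasurableSet (simplex n c) := by
  unfold simplex; measurability

lemma measurable_integrand (α : Fin (n + 1) → ℂ) (c : ℝ) : Measurable (integrand n α c) :=
  (by unfold kernel; fun_prop : Measurable (kernel n α c)).indicator (measurableSet_simplex c)

lemma smul_mem_simplex_iff {c : ℝ} (hc : 0 < c) {v : Fin n → ℝ} :
    c • v ∈ simplex n c ↔ v ∈ simplex n 1 := by
  simp only [simplex, mem_ofPred_eq, Pi.smul_apply, smul_eq_mul, ← Finset.mul_sum,
    mul_nonneg_iff_of_pos_left hc]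
  nth_rewrite 2 [← mul_one c]
  rw [mul_le_mul_iff_of_pos_left hc]

lemma kernel_smul (α : Fin (n + 1) → ℂ) {c : ℝ} (hc : 0 < c) {v : Fin n → ℝ}
    (hv : v ∈ simplex n 1) :
    (c : ℂ) ^ n * kernel n α c (c • v) = (c : ℂ) ^ (∑ j, α j - 1) * kernel n α 1 v := by
  have hc' : (c : ℂ) ≠ 0 := Complex.ofReal_ne_zero.2 hc.ne'
  have hlast : c - ∑ j, (c • v) j = c * (1 - ∑ j, v j) := by
    simp only [Pi.smul_apply, smul_eq_mul, ← Finset.mul_sum]; ring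
  have hexp : ∑ j, α j - 1 = n + ((∑ j : Fin n, (α j.castSucc - 1)) + (α (Fin.last n) - 1)) := by
    rw [Fin.sum_univ_castSucc, Finset.sum_sub_distrib]
    simp only [Finset.sum_const, Finset.card_univ, Fintype.card_fin, nsmul_eq_mul, mul_one]
    ring
  rw [kernel, kernel, hlast]
  simp only [Pi.smul_apply, smul_eq_mul, Complex.ofReal_mul,
    Complex.mul_cpow_ofReal_nonneg hc.le (hv.1 _),
    Complex.mul_cpow_ofReal_nonneg hc.le (sub_nonneg.2 hv.2), Finset.prod_mul_distrib, hexp,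
    Complex.cpow_add _ _ hc', ← Complex.cpow_sum _ _ hc', Complex.cpow_natCast]
  ring

lemma integrand_smul (α : Fin (n + 1) → ℂ) {c : ℝ} (hc : 0 < c) (v : Fin n → ℝ) :
    (c : ℂ) ^ n * integrand n α c (c • v) = (c : ℂ) ^ (∑ j, α j - 1) * integrand n α 1 v := by
  by_cases hv : v ∈ simplex n 1
  · rw [integrand, integrand, indicator_of_mem ((smul_mem_simplex_iff hc).2 hv),
      indicator_of_mem hv, kernel_smul α hc hv]
  · rw [integrand, integrand, indicator_of_notMem (mt (smul_mem_simplex_iff hc).1 hv),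
      indicator_of_notMem hv, mul_zero, mul_zero]

lemma integrable_integrand (α : Fin (n + 1) → ℂ) {c : ℝ} (hc : 0 < c)
    (h : Integrable (integrand n α 1)) : Integrable (integrand n α c) := by
  have hc' : (c : ℂ) ^ n ≠ 0 := pow_ne_zero n (Complex.ofReal_ne_zero.2 hc.ne')
  refine (integrable_comp_smul_iff volume _ hc.ne').1 ?_
  simp_rw [(eq_inv_mul_iff_mul_eq₀ hc').2 (integrand_smul α hc _)]
  exact (h.const_mul _).const_mul _

lemma integral_integrand (α : Fin (n + 1) → ℂ) {c : ℝ} (hc : 0 < c) :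
    ∫ t, integrand n α c t = (c : ℂ) ^ (∑ j, α j - 1) * ∫ t, integrand n α 1 t := by
  rw [integral_eq_integral_pow_smul_comp_smul _ hc, ← integral_const_mul]
  simp_rw [← integrand_smul α hc, Complex.real_smul, Complex.ofReal_pow]

lemma integral_norm_integrand (α : Fin (n + 1) → ℂ) {c : ℝ} (hc : 0 < c) :
    ∫ t, ‖integrand n α c t‖ = ‖(c : ℂ) ^ (∑ j, α j - 1)‖ * ∫ t, ‖integrand n α 1 t‖ := by
  rw [integral_eq_integral_pow_smul_comp_smul _ hc, ← integral_const_mul]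
  simp_rw [← norm_mul, ← integrand_smul α hc, norm_mul, norm_pow, Complex.norm_real,
    Real.norm_of_nonneg hc.le, smul_eq_mul]

lemma cons_mem_simplex_iff {c x : ℝ} {u : Fin n → ℝ} :
    (Fin.cons x u : Fin (n + 1) → ℝ) ∈ simplex (n + 1) c ↔ 0 ≤ x ∧ u ∈ simplex n (c - x) := by
  simp only [simplex, mem_ofPred_eq, Fin.forall_fin_succ, Fin.sum_univ_succ, Fin.cons_zero,
    Fin.cons_succ, le_sub_iff_add_le', and_assoc]

lemma kernel_cons (α : Fin (n + 2) → ℂ) (c x : ℝ) (u : Fin n → ℝ) :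
    kernel (n + 1) α c (Fin.cons x u) = (x : ℂ) ^ (α 0 - 1) * kernel n (Fin.tail α) (c - x) u := by
  simp only [kernel, Fin.prod_univ_succ, Fin.sum_univ_succ, Fin.cons_zero, Fin.cons_succ,
    Fin.castSucc_zero, Fin.tail, ← Fin.succ_castSucc, Fin.succ_last, sub_sub, mul_assoc]

lemma integrand_cons (α : Fin (n + 2) → ℂ) {c : ℝ} (x : ℝ) (u : Fin n → ℝ) :
    integrand (n + 1) α c (Fin.cons x u) =
      (Icc 0 c).indicator (fun y : ℝ => (y : ℂ) ^ (α 0 - 1)) x *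
        integrand n (Fin.tail α) (c - x) u := by
  by_cases hx : x ∈ Icc 0 c
  · by_cases hu : u ∈ simplex n (c - x)
    · rw [integrand, integrand, indicator_of_mem (cons_mem_simplex_iff.2 ⟨hx.1, hu⟩),
        indicator_of_mem hx, indicator_of_mem hu, kernel_cons]
    · rw [integrand, integrand, indicator_of_notMem (fun h => hu (cons_mem_simplex_iff.1 h).2),
        indicator_of_notMem hu, mul_zero]
  · have : (Fin.cons x u : Fin (n + 1) → ℝ) ∉ simplex (n + 1) c := by
      rw [cons_mem_simplex_iff]
      rintro ⟨hx0, hu⟩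
      exact hx ⟨hx0, by linarith [hu.2, Fintype.sum_nonneg (f := u) hu.1]⟩
    rw [integrand, indicator_of_notMem this, indicator_of_notMem hx, zero_mul]

noncomputable def betaIntegrand (a b : ℂ) (x : ℝ) : ℂ := (x : ℂ) ^ (a - 1) * (1 - (x : ℂ)) ^ (b - 1)

lemma integrable_indicator_betaIntegrand {a b : ℂ} (ha : 0 < a.re) (hb : 0 < b.re) :
    Integrable ((Icc 0 1).indicator (betaIntegrand a b)) := by
  rw [integrable_indicator_iff measurableSet_Icc, integrableOn_Icc_iff_integrableOn_Ioc,
    ← intervalIntegrable_iff_integrableOn_Ioc_of_le zero_le_one]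
  exact Complex.betaIntegral_convergent ha hb

lemma integral_indicator_betaIntegrand (a b : ℂ) :
    ∫ x, (Icc 0 1).indicator (betaIntegrand a b) x = Complex.betaIntegral a b := by
  rw [integral_indicator measurableSet_Icc, integral_Icc_eq_integral_Ioc,
    ← intervalIntegral.integral_of_le zero_le_one, Complex.betaIntegral]
  rfl

-- At `x = 1` the slice is the simplex of size `0`, where scaling breaks down.
section Fiber

variable (a : ℂ) (γ : Fin (n + 1) → ℂ) {x : ℝ}

lemma integrable_indicator_mul_integrand (hx : x ≠ 1) (h : Integrable (integrand n γ 1)) :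
    Integrable fun u => (Icc 0 1).indicator (fun y : ℝ => (y : ℂ) ^ (a - 1)) x *
      integrand n γ (1 - x) u := by
  by_cases hx' : x ∈ Icc 0 1
  · exact (integrable_integrand γ (sub_pos.2 (lt_of_le_of_ne hx'.2 hx)) h).const_mul _
  · simp only [indicator_of_notMem hx', zero_mul]
    exact integrable_zero _ _ _

lemma integral_indicator_mul_integrand (hx : x ≠ 1) :
    (Icc 0 1).indicator (fun y : ℝ => (y : ℂ) ^ (a - 1)) x * ∫ u, integrand n γ (1 - x) u =
      (Icc 0 1).indicator (betaIntegrand a (∑ j, γ j)) x * ∫ u, integrand n γ 1 u := by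
  by_cases hx' : x ∈ Icc 0 1
  · rw [indicator_of_mem hx', indicator_of_mem hx',
      integral_integrand γ (sub_pos.2 (lt_of_le_of_ne hx'.2 hx)), Complex.ofReal_sub,
      Complex.ofReal_one, betaIntegrand, mul_assoc]
  · simp only [indicator_of_notMem hx', zero_mul]

lemma norm_indicator_mul_integral_norm_integrand (hx : x ≠ 1) :
    ‖(Icc 0 1).indicator (fun y : ℝ => (y : ℂ) ^ (a - 1)) x‖ * ∫ u, ‖integrand n γ (1 - x) u‖ =
      ‖(Icc 0 1).indicator (betaIntegrand a (∑ j, γ j)) x‖ * ∫ u, ‖integrand n γ 1 u‖ := by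
  by_cases hx' : x ∈ Icc 0 1
  · rw [indicator_of_mem hx', indicator_of_mem hx',
      integral_norm_integrand γ (sub_pos.2 (lt_of_le_of_ne hx'.2 hx)), Complex.ofReal_sub,
      Complex.ofReal_one, betaIntegrand, norm_mul, mul_assoc]
  · simp only [indicator_of_notMem hx', norm_zero, zero_mul]

end Fiber

theorem integrable_integrand_succ_and_integral (α : Fin (n + 2) → ℂ) (hα₀ : 0 < (α 0).re)
    (hσ : 0 < (∑ j, Fin.tail α j).re) (h : Integrable (integrand n (Fin.tail α) 1)) :
    Integrable (integrand (n + 1) α 1) ∧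
      ∫ t, integrand (n + 1) α 1 t =
        Complex.betaIntegral (α 0) (∑ j, Fin.tail α j) * ∫ t, integrand n (Fin.tail α) 1 t := by
  set e := (MeasurableEquiv.piFinSuccAbove (fun _ : Fin (n + 1) => ℝ) 0).symm
  have he : MeasurePreserving e (volume.prod volume) volume :=
    (volume_preserving_piFinSuccAbove (fun _ : Fin (n + 1) => ℝ) 0).symm
  have hcons (p : ℝ × (Fin n → ℝ)) : integrand (n + 1) α 1 (e p) =
      (Icc 0 1).indicator (fun y : ℝ => (y : ℂ) ^ (α 0 - 1)) p.1 *
        integrand n (Fin.tail α) (1 - p.1) p.2 := by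
    simp only [e, MeasurableEquiv.piFinSuccAbove_symm_apply, Fin.insertNthEquiv,
      Equiv.coe_fn_mk, Fin.insertNth_zero', integrand_cons]
  have hint : Integrable (fun p => integrand (n + 1) α 1 (e p)) (volume.prod volume) := by
    refine (integrable_prod_iff
      ((measurable_integrand α 1).comp e.measurable).aestronglyMeasurable).2 ⟨?_, ?_⟩
    · filter_upwards [Measure.ae_ne volume 1] with x hx
      simpa only [Function.comp_apply, hcons] using integrable_indicator_mul_integrand _ _ hx h
    · refine ((integrable_indicator_betaIntegrand hα₀ hσ).norm.mul_const
        (∫ u, ‖integrand n (Fin.tail α) 1 u‖)).congr ?_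
      filter_upwards [Measure.ae_ne volume 1] with x hx
      simp only [Function.comp_apply, hcons, norm_mul, integral_const_mul]
      exact (norm_indicator_mul_integral_norm_integrand _ _ hx).symm
  refine ⟨(he.integrable_comp_emb e.measurableEmbedding).1 hint, ?_⟩
  have hfiber : (fun x => ∫ u, integrand (n + 1) α 1 (e (x, u))) =ᵐ[volume] fun x =>
      (Icc 0 1).indicator (betaIntegrand (α 0) (∑ j, Fin.tail α j)) x *
        ∫ u, integrand n (Fin.tail α) 1 u := by
    filter_upwards [Measure.ae_ne volume 1] with x hx
    simp only [hcons, integral_const_mul]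
    exact integral_indicator_mul_integrand _ _ hx
  rw [← he.integral_comp e.measurableEmbedding, integral_prod _ hint, integral_congr_ae hfiber,
    integral_mul_const, integral_indicator_betaIntegrand]

theorem integrable_integrand_and_integral (n : ℕ) (α : Fin (n + 1) → ℂ) (hα : ∀ j, 0 < (α j).re) :
    Integrable (integrand n α 1) ∧
      ∫ t, integrand n α 1 t = (∏ j, Complex.Gamma (α j)) / Complex.Gamma (∑ j, α j) := by
  induction n with
  | zero =>
    have : integrand 0 α 1 = fun _ => 1 := by
      funext t; simp [integrand, simplex, kernel]
    rw [this]
    simp [Complex.Gamma_ne_zero_of_re_pos (hα 0), measureReal_def, volume_pi]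
  | succ n ih =>
    have hσ : 0 < (∑ j, Fin.tail α j).re := by
      rw [Complex.re_sum]
      exact Finset.sum_pos (fun j _ => hα _) Finset.univ_nonempty
    obtain ⟨hint, hval⟩ := ih (Fin.tail α) fun j => hα _
    obtain ⟨hint', hval'⟩ := integrable_integrand_succ_and_integral α (hα 0) hσ hint
    refine ⟨hint', ?_⟩
    have hΓσ := Complex.Gamma_ne_zero_of_re_pos hσ
    rw [hval', hval, Complex.betaIntegral_eq_Gamma_mul_div _ _ (hα 0) hσ,
      Fin.prod_univ_succ (f := fun j => Complex.Gamma (α j)), Fin.sum_univ_succ (f := α)]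
    field_simp
    rfl

end Dirichlet

/-- Dirichlet's integral over the standard simplex:
`∫_{Δᵏ} t₁^{α₁-1} ⋯ t_k^{α_k-1} (1-t₁-⋯-t_k)^{α_{k+1}-1} dt
  = Γ(α₁)⋯Γ(α_{k+1}) / Γ(α₁+⋯+α_{k+1})`, including integrability. -/
theorem stmt6 (k : ℕ) (α : Fin (k + 1) → ℂ) (hα : ∀ j, 0 < (α j).re) :
    IntegrableOn
      (fun t : Fin k → ℝ =>
        (∏ j : Fin k, ((t j : ℂ) ^ (α j.castSucc - 1))) *
          (((1 - ∑ j, t j : ℝ) : ℂ) ^ (α (Fin.last k) - 1)))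
      {t : Fin k → ℝ | (∀ j, 0 ≤ t j) ∧ ∑ j, t j ≤ 1} volume ∧
    (∫ t : Fin k → ℝ in {t : Fin k → ℝ | (∀ j, 0 ≤ t j) ∧ ∑ j, t j ≤ 1},
        (∏ j : Fin k, ((t j : ℂ) ^ (α j.castSucc - 1))) *
          (((1 - ∑ j, t j : ℝ) : ℂ) ^ (α (Fin.last k) - 1)))
      = (∏ j, Complex.Gamma (α j)) / Complex.Gamma (∑ j, α j) := by
  obtain ⟨hint, hval⟩ := Dirichlet.integrable_integrand_and_integral k α hα
  rw [Dirichlet.integrand, integral_indicator (Dirichlet.measurableSet_simplex 1)] at hval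
  exact ⟨(integrable_indicator_iff (Dirichlet.measurableSet_simplex 1)).1 hint, hval⟩
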